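/- arXiv:2010.08902 — 2 statements merged into one kernel-verified Lean document; each statement's English description precedes it below -/
import Mathlib

section
/- The group B_2(C_2 × C_2) is isomorphic to the Klein four group Z/2 × Z/2, generated by the three symbols [χ_1,χ_2], [χ_1,χ_1+χ_2], [χ_1+χ_2,χ_2], each element of order at most 2, with each of these symbols equal to the sum of the other two. -/
open FreeAbelianGroup

/-- A multiset of characters generates the character group. -/
def Adm {A : Type} [AddCommGroup A] (s : Multiset A) : Prop :=
  AddSubgroup.closure {x | x ∈ s} = ⊤

/-- Admissible symbols: multisets of `n` characters generating `A`. -/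
def Symb (A : Type) [AddCommGroup A] (n : ℕ) : Type :=
  {s : Multiset A // Multiset.card s = n ∧ Adm s}

/-- The blow-up relations (B₂). -/
def blowupRels (A : Type) [AddCommGroup A] (n : ℕ) :
    Set (FreeAbelianGroup (Symb A n)) :=
  {x | ∃ (a b : A) (t : Multiset A)
      (h : Multiset.card (a ::ₘ b ::ₘ t) = n ∧ Adm (a ::ₘ b ::ₘ t))
      (h1 : Multiset.card (a ::ₘ (b - a) ::ₘ t) = n ∧ Adm (a ::ₘ (b - a) ::ₘ t))
      (h2 : Multiset.card ((a - b) ::ₘ b ::ₘ t) = n ∧ Adm ((a - b) ::ₘ b ::ₘ t)),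
      a ≠ b ∧
      x = of (⟨a ::ₘ b ::ₘ t, h⟩ : Symb A n) - of ⟨a ::ₘ (b - a) ::ₘ t, h1⟩
            - of ⟨(a - b) ::ₘ b ::ₘ t, h2⟩} ∪
  {x | ∃ (a : A) (t : Multiset A)
      (h : Multiset.card (a ::ₘ a ::ₘ t) = n ∧ Adm (a ::ₘ a ::ₘ t))
      (h0 : Multiset.card ((0 : A) ::ₘ a ::ₘ t) = n ∧ Adm ((0 : A) ::ₘ a ::ₘ t)),
      x = of (⟨a ::ₘ a ::ₘ t, h⟩ : Symb A n) - of ⟨(0 : A) ::ₘ a ::ₘ t, h0⟩}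

/-- The group of equivariant birational types `𝓑ₙ(G)`, for `A = G^∨`. -/
def B (A : Type) [AddCommGroup A] (n : ℕ) : Type :=
  FreeAbelianGroup (Symb A n) ⧸ AddSubgroup.closure (blowupRels A n)

instance (A : Type) [AddCommGroup A] (n : ℕ) : AddCommGroup (B A n) := by
  unfold B; infer_instance

/-- The class of a symbol in `𝓑ₙ(G)`. -/
def symb {A : Type} [AddCommGroup A] {n : ℕ} (s : Multiset A)
    (h : Multiset.card s = n ∧ Adm s) : B A n :=
  QuotientAddGroup.mk (of (⟨s, h⟩ : Symb A n))

lemma adm_of_unit {N : ℕ} [NeZero N] {s : Multiset (ZMod N)} {u : ZMod N}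
    (hu : u ∈ s) (h : IsUnit u) : Adm s := by
  rw [Adm, AddSubgroup.eq_top_iff']
  intro x
  have hu' : u ∈ AddSubgroup.closure {y | y ∈ s} := AddSubgroup.subset_closure hu
  obtain ⟨v, hv⟩ := h.exists_left_inv
  have hx : x = (x * v).val • u := by
    rw [nsmul_eq_mul, ZMod.natCast_val, ZMod.cast_id, mul_assoc, hv, mul_one]
  rw [hx]
  exact AddSubgroup.nsmul_mem _ hu' _

abbrev Klein := ZMod 2 × ZMod 2

lemma adm_klein {a b : Klein}
    (h : ∀ x : Klein, x = 0 ∨ x = a ∨ x = b ∨ x = a + b) :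
    Adm ({a, b} : Multiset Klein) := by
  rw [Adm, AddSubgroup.eq_top_iff']
  intro x
  have ha : a ∈ AddSubgroup.closure {y | y ∈ ({a, b} : Multiset Klein)} :=
    AddSubgroup.subset_closure (by simp)
  have hb : b ∈ AddSubgroup.closure {y | y ∈ ({a, b} : Multiset Klein)} :=
    AddSubgroup.subset_closure (by simp)
  rcases h x with h | h | h | h <;> subst h
  · exact zero_mem _
  · exact ha
  · exact hb
  · exact add_mem ha hb

def χ₁ : Klein := (1, 0)
def χ₂ : Klein := (0, 1)

def k12 : B Klein 2 := symb {χ₁, χ₂} ⟨by decide, adm_klein (by decide)⟩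
def k13 : B Klein 2 := symb {χ₁, χ₁ + χ₂} ⟨by decide, adm_klein (by decide)⟩
def k23 : B Klein 2 := symb {χ₁ + χ₂, χ₂} ⟨by decide, adm_klein (by decide)⟩

/-! Every admissible pair of characters of `C₂ × C₂` is one of the three listed symbols, so these
generate, and the blow-up relation at each of them says that it is the sum of the other two; two of
these relations together give `2 • [·] = 0`. Conversely, in dimension 2 the sum of the entries of a
symbol is invariant under blow-up (both sides sum to `a + b`), and for a non-cyclic group no
relation `[a, a] = [0, a]` occurs. This gives a homomorphism `B₂(G) → A` sending the symbols to
`χ₁ + χ₂`, `χ₂`, `χ₁`; it has the left inverse `χ₁ ↦ [χ₁ + χ₂, χ₂]`, `χ₂ ↦ [χ₁, χ₁ + χ₂]`. -/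

section General

variable {A : Type} [AddCommGroup A]

theorem Adm.isAddCyclic {s : Multiset A} (hs : Adm s) {g : A}
    (hg : ∀ x ∈ s, x ∈ AddSubgroup.zmultiples g) : IsAddCyclic A := by
  refine ⟨g, fun x => ?_⟩
  have hle : AddSubgroup.closure {x | x ∈ s} ≤ AddSubgroup.zmultiples g :=
    (AddSubgroup.closure_le _).mpr hg
  rw [hs] at hle
  exact hle (AddSubgroup.mem_top x)

theorem Adm.pair_ne_zero_and_ne (hA : ¬IsAddCyclic A) {a b : A}
    (h : Adm ({a, b} : Multiset A)) : a ≠ 0 ∧ b ≠ 0 ∧ a ≠ b := by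
  refine ⟨?_, ?_, ?_⟩ <;> rintro rfl <;> apply hA
  · exact h.isAddCyclic (g := b) (by simp)
  · exact h.isAddCyclic (g := a) (by simp)
  · exact h.isAddCyclic (g := a) (by simp)

theorem symb_blowup {n : ℕ} {a b : A} (hab : a ≠ b) {t s₁ s₂ : Multiset A}
    (hs₁ : a ::ₘ (b - a) ::ₘ t = s₁) (hs₂ : (a - b) ::ₘ b ::ₘ t = s₂)
    {h : Multiset.card (a ::ₘ b ::ₘ t) = n ∧ Adm (a ::ₘ b ::ₘ t)}
    {h₁ : Multiset.card s₁ = n ∧ Adm s₁} {h₂ : Multiset.card s₂ = n ∧ Adm s₂} :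
    symb (a ::ₘ b ::ₘ t) h = symb s₁ h₁ + symb s₂ h₂ := by
  subst hs₁ hs₂
  unfold symb
  -- `symb` and `blowupRels` elaborate symbols as plain subtypes rather than as `Symb A n`
  erw [← QuotientAddGroup.mk_add, QuotientAddGroup.eq_iff_sub_mem, ← sub_sub]
  exact AddSubgroup.subset_closure (Or.inl ⟨a, b, t, h, h₁, h₂, hab, rfl⟩)

theorem closure_symb_eq_top (n : ℕ) :
    AddSubgroup.closure {x : B A n | ∃ s h, symb s h = x} = ⊤ := by
  rw [AddSubgroup.eq_top_iff']
  intro x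
  induction x using QuotientAddGroup.induction_on with | H y => ?_
  induction y using FreeAbelianGroup.induction_on with
  | zero => exact zero_mem _
  | of s => exact AddSubgroup.subset_closure ⟨s.1, s.2, rfl⟩
  | neg y hy => exact neg_mem hy
  | add y z hy hz => exact add_mem hy hz

def Symb.sum {n : ℕ} (s : Symb A n) : A := s.1.sum

theorem blowupRels_two_subset_ker_sum (hA : ¬IsAddCyclic A) :
    blowupRels A 2 ⊆ (FreeAbelianGroup.lift (Symb.sum (A := A) (n := 2))).ker := by
  rintro x (⟨a, b, t, h, h₁, h₂, -, rfl⟩ | ⟨a, t, h, -, rfl⟩)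
  · obtain rfl : t = 0 := by simpa using h.1
    -- restate the symbols of `blowupRels` as elements of `Symb A 2`, not plain subtypes
    change FreeAbelianGroup.lift Symb.sum
      (of (α := Symb A 2) ⟨_, h⟩ - of (α := Symb A 2) ⟨_, h₁⟩ - of (α := Symb A 2) ⟨_, h₂⟩) = 0
    rw [map_sub, map_sub, FreeAbelianGroup.lift_apply_of Symb.sum ⟨_, h⟩,
      FreeAbelianGroup.lift_apply_of Symb.sum ⟨_, h₁⟩,
      FreeAbelianGroup.lift_apply_of Symb.sum ⟨_, h₂⟩]
    simp only [Symb.sum, Multiset.sum_cons, Multiset.sum_zero]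
    abel
  · obtain rfl : t = 0 := by simpa using h.1
    exact (hA (h.2.isAddCyclic (g := a) (by simp))).elim

def symbolSum (hA : ¬IsAddCyclic A) : B A 2 →+ A :=
  QuotientAddGroup.lift _ _ ((AddSubgroup.closure_le _).mpr (blowupRels_two_subset_ker_sum hA))

theorem symbolSum_symb (hA : ¬IsAddCyclic A) (s : Multiset A)
    (h : Multiset.card s = 2 ∧ Adm s) : symbolSum hA (symb s h) = s.sum :=
  FreeAbelianGroup.lift_apply_of _ _

def zmodHomOfNsmulEqZero {n : ℕ} (a : A) (ha : n • a = 0) : ZMod n →+ A :=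
  ZMod.lift n ⟨zmultiplesHom A a, by simpa using ha⟩

theorem zmodHomOfNsmulEqZero_one {n : ℕ} (a : A) (ha : n • a = 0) :
    zmodHomOfNsmulEqZero a ha 1 = a := by
  rw [zmodHomOfNsmulEqZero, ← Int.cast_one, ZMod.lift_coe]
  simp

theorem two_nsmul_eq_zero_of_eq_add {x y z : A} (hx : x = y + z) (hy : y = x + z) :
    2 • z = 0 := by
  rw [hy, add_assoc, left_eq_add] at hx
  rwa [two_nsmul]

end General

theorem Klein.admissible_pair_cases {s : Multiset Klein} (h : Multiset.card s = 2 ∧ Adm s) :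
    s = {χ₁, χ₂} ∨ s = {χ₁, χ₁ + χ₂} ∨ s = {χ₁ + χ₂, χ₂} := by
  obtain ⟨a, b, rfl⟩ := Multiset.card_eq_two.mp h.1
  have hne := h.2.pair_ne_zero_and_ne IsAddKleinFour.not_isAddCyclic
  clear h
  revert a b
  decide

theorem symb_mem_k12_k13_k23 (s : Multiset Klein) (h : Multiset.card s = 2 ∧ Adm s) :
    symb s h ∈ ({k12, k13, k23} : Set (B Klein 2)) := by
  rcases Klein.admissible_pair_cases h with rfl | rfl | rfl
  exacts [Or.inl rfl, Or.inr (Or.inl rfl), Or.inr (Or.inr rfl)]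

theorem closure_k12_k13_k23 :
    AddSubgroup.closure {k12, k13, k23} = (⊤ : AddSubgroup (B Klein 2)) :=
  top_unique <| (closure_symb_eq_top 2).symm.le.trans <|
    AddSubgroup.closure_mono <| by rintro _ ⟨s, h, rfl⟩; exact symb_mem_k12_k13_k23 s h

theorem k12_eq_k13_add_k23 : k12 = k13 + k23 :=
  symb_blowup (a := χ₁) (b := χ₂) (t := 0) (by decide) (by decide) (by decide)

theorem k13_eq_k12_add_k23 : k13 = k12 + k23 :=
  symb_blowup (a := χ₁) (b := χ₁ + χ₂) (t := 0) (by decide) (by decide) (by decide)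

theorem k23_eq_k12_add_k13 : k23 = k12 + k13 :=
  (symb_blowup (a := χ₁ + χ₂) (b := χ₂) (t := 0) (by decide) (by decide) (by decide)).trans
    (add_comm _ _)

theorem two_nsmul_k12 : 2 • k12 = 0 :=
  two_nsmul_eq_zero_of_eq_add (k13_eq_k12_add_k23.trans (add_comm _ _))
    (k23_eq_k12_add_k13.trans (add_comm _ _))

theorem two_nsmul_k13 : 2 • k13 = 0 :=
  two_nsmul_eq_zero_of_eq_add (k12_eq_k13_add_k23.trans (add_comm _ _)) k23_eq_k12_add_k13

theorem two_nsmul_k23 : 2 • k23 = 0 :=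
  two_nsmul_eq_zero_of_eq_add k12_eq_k13_add_k23 k13_eq_k12_add_k23

def kleinSum : B Klein 2 →+ Klein := symbolSum IsAddKleinFour.not_isAddCyclic

theorem kleinSum_k12 : kleinSum k12 = χ₁ + χ₂ := by rw [k12, kleinSum, symbolSum_symb]; decide

theorem kleinSum_k13 : kleinSum k13 = χ₂ := by rw [k13, kleinSum, symbolSum_symb]; decide

theorem kleinSum_k23 : kleinSum k23 = χ₁ := by rw [k23, kleinSum, symbolSum_symb]; decide

theorem kleinSum_surjective : Function.Surjective kleinSum := by
  have h : ∀ x : Klein, x = 0 ∨ x = χ₂ ∨ x = χ₁ ∨ x = χ₁ + χ₂ := by decide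
  intro x
  rcases h x with rfl | rfl | rfl | rfl
  exacts [⟨0, map_zero _⟩, ⟨k13, kleinSum_k13⟩, ⟨k23, kleinSum_k23⟩, ⟨k12, kleinSum_k12⟩]

def kleinSymbol : Klein →+ B Klein 2 :=
  (zmodHomOfNsmulEqZero k23 two_nsmul_k23).coprod (zmodHomOfNsmulEqZero k13 two_nsmul_k13)

theorem kleinSymbol_χ₁ : kleinSymbol χ₁ = k23 := by
  simp [kleinSymbol, χ₁, zmodHomOfNsmulEqZero_one]

theorem kleinSymbol_χ₂ : kleinSymbol χ₂ = k13 := by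
  simp [kleinSymbol, χ₂, zmodHomOfNsmulEqZero_one]

theorem kleinSymbol_kleinSum (x : B Klein 2) : kleinSymbol (kleinSum x) = x := by
  suffices kleinSymbol.comp kleinSum = AddMonoidHom.id _ from DFunLike.congr_fun this x
  refine AddMonoidHom.eq_of_eqOn_dense closure_k12_k13_k23 ?_
  rintro _ (rfl | rfl | rfl) <;>
    simp only [AddMonoidHom.comp_apply, AddMonoidHom.id_apply, kleinSum_k12, kleinSum_k13,
      kleinSum_k23, map_add, kleinSymbol_χ₁, kleinSymbol_χ₂]
  rw [k12_eq_k13_add_k23, add_comm]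

noncomputable def kleinEquiv : B Klein 2 ≃+ Klein :=
  AddEquiv.ofBijective kleinSum
    ⟨Function.LeftInverse.injective kleinSymbol_kleinSum, kleinSum_surjective⟩

/-- `B₂(C₂ × C₂)` is the Klein four group, generated by the three
symbols `[χ₁,χ₂]`, `[χ₁,χ₁+χ₂]`, `[χ₁+χ₂,χ₂]`, each of order at most 2, and
each equal to the sum of the other two. -/
theorem B2_Klein :
    (∃ φ : B Klein 2 ≃+ Klein, True) ∧
    AddSubgroup.closure {k12, k13, k23} = (⊤ : AddSubgroup (B Klein 2)) ∧
    2 • k12 = 0 ∧ 2 • k13 = 0 ∧ 2 • k23 = 0 ∧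
    k12 = k13 + k23 ∧ k13 = k12 + k23 ∧ k23 = k12 + k13 :=
  ⟨⟨kleinEquiv, trivial⟩, closure_k12_k13_k23, two_nsmul_k12, two_nsmul_k13, two_nsmul_k23,
    k12_eq_k13_add_k23, k13_eq_k12_add_k23, k23_eq_k12_add_k13⟩
end

section
/- In the quotient B_n^-(G) of B_n(G) by the antisymmetry relation [-a_1, a_2, ..., a_n] = -[a_1, a_2, ..., a_n], any symbol with a repeated entry vanishes: [a, a, a_3, ..., a_n]^- = 0, and any symbol with a zero entry vanishes: [0, a_2, ..., a_n]^- = 0. -/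
open FreeAbelianGroup

/-- Antisymmetry relations: negating an entry negates the symbol. -/
def antiRels (A : Type) [AddCommGroup A] (n : ℕ) :
    Set (FreeAbelianGroup (Symb A n)) :=
  {x | ∃ (a : A) (t : Multiset A)
      (h : Multiset.card ((-a) ::ₘ t) = n ∧ Adm ((-a) ::ₘ t))
      (h' : Multiset.card (a ::ₘ t) = n ∧ Adm (a ::ₘ t)),
      x = of (⟨(-a) ::ₘ t, h⟩ : Symb A n) + of ⟨a ::ₘ t, h'⟩}

/-- The antisymmetrized group `𝓑ₙ⁻(G)`. -/
def Bm (A : Type) [AddCommGroup A] (n : ℕ) : Type :=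
  FreeAbelianGroup (Symb A n) ⧸ AddSubgroup.closure (blowupRels A n ∪ antiRels A n)

instance (A : Type) [AddCommGroup A] (n : ℕ) : AddCommGroup (Bm A n) := by
  unfold Bm; infer_instance

/-- The class of a symbol in `𝓑ₙ⁻(G)`. -/
def symbm {A : Type} [AddCommGroup A] {n : ℕ} (s : Multiset A)
    (h : Multiset.card s = n ∧ Adm s) : Bm A n :=
  QuotientAddGroup.mk (of (⟨s, h⟩ : Symb A n))

/-! Blowing up `[0, b, t]` with `b ≠ 0` gives `[0, b, t] = [0, b, t] + [-b, b, t]`, so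
`[-b, b, t] = 0`; by antisymmetry also `[b, b, t] = 0`. A symbol `[0, t]` generates the
nontrivial group `A`, so `t = b ::ₘ t'` with `b ≠ 0`, and the blow-up relation for a repeated
entry gives `[0, b, t'] = [b, b, t'] = 0`. Finally `[a, a, t] = [0, a, t]`. -/

section Adm

variable {A : Type} [AddCommGroup A]

lemma Adm.cons_of_mem_closure {x : A} {t : Multiset A} (hs : Adm (x ::ₘ t))
    (hx : x ∈ AddSubgroup.closure {z | z ∈ t}) (y : A) : Adm (y ::ₘ t) := by
  rw [Adm, eq_top_iff, ← hs, AddSubgroup.closure_le]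
  have hmono : AddSubgroup.closure {z | z ∈ t} ≤ AddSubgroup.closure {z | z ∈ y ::ₘ t} :=
    AddSubgroup.closure_mono fun z hz => Multiset.mem_cons_of_mem hz
  intro z hz
  rcases Multiset.mem_cons.mp hz with rfl | hz
  · exact hmono hx
  · exact AddSubgroup.subset_closure (Multiset.mem_cons_of_mem hz)

lemma card_eq_and_adm_cons_of_mem_closure {n : ℕ} {x : A} {t : Multiset A}
    (h : Multiset.card (x ::ₘ t) = n ∧ Adm (x ::ₘ t))
    (hx : x ∈ AddSubgroup.closure {z | z ∈ t}) (y : A) :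
    Multiset.card (y ::ₘ t) = n ∧ Adm (y ::ₘ t) :=
  ⟨by simpa using h.1, h.2.cons_of_mem_closure hx y⟩

lemma Adm.exists_ne_zero [Nontrivial A] {s : Multiset A} (hs : Adm s) : ∃ b ∈ s, b ≠ 0 := by
  by_contra! hzero
  have hbot : AddSubgroup.closure {z | z ∈ s} = ⊥ :=
    AddSubgroup.closure_eq_bot_iff.mpr hzero
  exact top_ne_bot (hs.symm.trans hbot)

end Adm

section Relations

variable {A : Type} [AddCommGroup A] {n : ℕ}

lemma mk_eq_zero_of_mem_rels {x : FreeAbelianGroup (Symb A n)}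
    (hx : x ∈ blowupRels A n ∪ antiRels A n) : (QuotientAddGroup.mk x : Bm A n) = 0 :=
  (QuotientAddGroup.eq_zero_iff x).mpr (AddSubgroup.subset_closure hx)

lemma symbm_blowup {a b : A} (hab : a ≠ b) {t : Multiset A}
    (h : Multiset.card (a ::ₘ b ::ₘ t) = n ∧ Adm (a ::ₘ b ::ₘ t))
    (h1 : Multiset.card (a ::ₘ (b - a) ::ₘ t) = n ∧ Adm (a ::ₘ (b - a) ::ₘ t))
    (h2 : Multiset.card ((a - b) ::ₘ b ::ₘ t) = n ∧ Adm ((a - b) ::ₘ b ::ₘ t)) :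
    symbm (a ::ₘ b ::ₘ t) h = symbm (a ::ₘ (b - a) ::ₘ t) h1 + symbm ((a - b) ::ₘ b ::ₘ t) h2 := by
  rw [← sub_eq_zero, ← sub_sub]
  exact mk_eq_zero_of_mem_rels (Or.inl (Or.inl ⟨a, b, t, h, h1, h2, hab, rfl⟩))

lemma symbm_cons_self {a : A} {t : Multiset A}
    (h : Multiset.card (a ::ₘ a ::ₘ t) = n ∧ Adm (a ::ₘ a ::ₘ t))
    (h0 : Multiset.card ((0 : A) ::ₘ a ::ₘ t) = n ∧ Adm ((0 : A) ::ₘ a ::ₘ t)) :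
    symbm (a ::ₘ a ::ₘ t) h = symbm ((0 : A) ::ₘ a ::ₘ t) h0 :=
  sub_eq_zero.mp (mk_eq_zero_of_mem_rels (Or.inl (Or.inr ⟨a, t, h, h0, rfl⟩)))

lemma symbm_neg_cons {a : A} {t : Multiset A}
    (h : Multiset.card ((-a) ::ₘ t) = n ∧ Adm ((-a) ::ₘ t))
    (h' : Multiset.card (a ::ₘ t) = n ∧ Adm (a ::ₘ t)) :
    symbm ((-a) ::ₘ t) h = -symbm (a ::ₘ t) h' :=
  eq_neg_of_add_eq_zero_left (mk_eq_zero_of_mem_rels (Or.inr ⟨a, t, h, h', rfl⟩))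

lemma symbm_neg_cons_self_cons {b : A} (hb : b ≠ 0) {t : Multiset A}
    (h : Multiset.card ((-b) ::ₘ b ::ₘ t) = n ∧ Adm ((-b) ::ₘ b ::ₘ t)) :
    symbm ((-b) ::ₘ b ::ₘ t) h = 0 := by
  have h0 := card_eq_and_adm_cons_of_mem_closure h
    (neg_mem (AddSubgroup.subset_closure (Multiset.mem_cons_self b t))) 0
  have hblowup := symbm_blowup hb.symm h0 (by simpa using h0) (by simpa using h)
  simp only [sub_zero, zero_sub] at hblowup
  exact left_eq_add.mp hblowup

lemma symbm_cons_self_cons_of_ne_zero {b : A} (hb : b ≠ 0) {t : Multiset A}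
    (h : Multiset.card (b ::ₘ b ::ₘ t) = n ∧ Adm (b ::ₘ b ::ₘ t)) :
    symbm (b ::ₘ b ::ₘ t) h = 0 := by
  have hneg := card_eq_and_adm_cons_of_mem_closure h
    (AddSubgroup.subset_closure (Multiset.mem_cons_self b t)) (-b)
  rw [← neg_eq_zero, ← symbm_neg_cons hneg h]
  exact symbm_neg_cons_self_cons hb hneg

lemma symbm_zero_cons [Nontrivial A] {t : Multiset A}
    (h : Multiset.card ((0 : A) ::ₘ t) = n ∧ Adm ((0 : A) ::ₘ t)) :
    symbm ((0 : A) ::ₘ t) h = 0 := by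
  obtain ⟨b, hbt, hb⟩ : ∃ b ∈ t, b ≠ 0 := by
    obtain ⟨b, hbs, hb⟩ := h.2.exists_ne_zero
    exact ⟨b, (Multiset.mem_cons.mp hbs).resolve_left hb, hb⟩
  obtain ⟨t, rfl⟩ := Multiset.exists_cons_of_mem hbt
  have hbb := card_eq_and_adm_cons_of_mem_closure h (zero_mem _) b
  rw [← symbm_cons_self hbb h]
  exact symbm_cons_self_cons_of_ne_zero hb hbb

end Relations

theorem symbm_repeat_and_zero_vanish_general {A : Type} [AddCommGroup A]
    [Nontrivial A] {n : ℕ} :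
    (∀ (a : A) (t : Multiset A)
      (h : Multiset.card (a ::ₘ a ::ₘ t) = n ∧ Adm (a ::ₘ a ::ₘ t)),
      symbm (a ::ₘ a ::ₘ t) h = 0) ∧
    (∀ (t : Multiset A)
      (h : Multiset.card ((0 : A) ::ₘ t) = n ∧ Adm ((0 : A) ::ₘ t)),
      symbm ((0 : A) ::ₘ t) h = 0) := by
  refine ⟨fun a t h => ?_, fun t h => symbm_zero_cons h⟩
  have h0 := card_eq_and_adm_cons_of_mem_closure h
    (AddSubgroup.subset_closure (Multiset.mem_cons_self a t)) 0
  rw [symbm_cons_self h h0]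
  exact symbm_zero_cons h0

/-- in `𝓑ₙ⁻(G)` every symbol with a repeated entry vanishes, and
every symbol with a zero entry vanishes. -/
theorem symbm_repeat_and_zero_vanish {A : Type} [AddCommGroup A] [Finite A]
    [Nontrivial A] {n : ℕ} :
    (∀ (a : A) (t : Multiset A)
      (h : Multiset.card (a ::ₘ a ::ₘ t) = n ∧ Adm (a ::ₘ a ::ₘ t)),
      symbm (a ::ₘ a ::ₘ t) h = 0) ∧
    (∀ (t : Multiset A)
      (h : Multiset.card ((0 : A) ::ₘ t) = n ∧ Adm ((0 : A) ::ₘ t)),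
      symbm ((0 : A) ::ₘ t) h = 0) :=
  symbm_repeat_and_zero_vanish_general
end
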